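/- Let f: ℝⁿ → ℝ be differentiable and α ∈ (0,1]. Then ∇f is α-averaged (i.e., ∇f = (1-α)·Id + α·R for some nonexpansive operator R) if and only if -(2α-1)‖x-y‖² ≤ ⟨∇f(x) - ∇f(y), x-y⟩ ≤ ‖x-y‖² for all x, y ∈ ℝⁿ. -/

import Mathlib

/-!
With `u = x - y` and `d = ∇f x - ∇f y`, one has
`‖d - (1 - α) u‖² - α² ‖u‖² = ‖u - d‖² - 2α ⟪u - d, u⟫`, so `∇f` is α-averaged exactly when
`Id - ∇f` is `1/(2α)`-cocoercive. By Cauchy–Schwarz a cocoercive map `G` satisfies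
`0 ≤ ⟪G x - G y, x - y⟫ ≤ 2α ‖x - y‖²`, which is the two-sided bound. Conversely `Id - ∇f` is the
gradient of `g = ‖·‖²/2 - f`, and the bound says that `∇g` is monotone with one-sided Lipschitz
constant `2α`; the Baillon–Haddad argument (the convexity lower bound together with the descent
lemma at a gradient step) turns this into cocoercivity of `∇g`.
-/

open scoped RealInnerProductSpace

section Gradient

variable {E : Type*} [NormedAddCommGroup E] [InnerProductSpace ℝ E] [CompleteSpace E]
  {g : E → ℝ} {g' : E → E}

theorem HasGradientAt.hasDerivAt_comp_add_smul {a x v : E} {t : ℝ}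
    (h : HasGradientAt g a (x + t • v)) :
    HasDerivAt (fun s : ℝ => g (x + s • v)) ⟪a, v⟫ t := by
  have hline : HasDerivAt (fun s : ℝ => x + s • v) v t := by
    simpa using ((hasDerivAt_id t).smul_const v).const_add x
  have := h.hasFDerivAt.comp_hasDerivAt t hline
  simp only [InnerProductSpace.toDual_apply_apply] at this
  exact this

theorem HasGradientAt.neg {a x : E} (h : HasGradientAt g a x) :
    HasGradientAt (fun y => -g y) (-a) x := by
  rw [hasGradientAt_iff_hasFDerivAt, map_neg]
  exact h.hasFDerivAt.neg

theorem hasGradientAt_norm_sq_div_two (x : E) :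
    HasGradientAt (fun y => ‖y‖ ^ 2 / 2) x x := by
  rw [hasGradientAt_iff_hasFDerivAt]
  have hf : (fun y : E => ‖y‖ ^ 2 / 2) = (2⁻¹ : ℝ) • fun y => ‖y‖ ^ 2 := by
    ext y; simp [div_eq_inv_mul]
  have hd : InnerProductSpace.toDual ℝ E x = (2⁻¹ : ℝ) • (2 : ℕ) • innerSL ℝ x := by
    ext v; simp
  rw [hf, hd]
  exact (hasStrictFDerivAt_norm_sq x).hasFDerivAt.const_smul _

theorem HasGradientAt.sub {f : E → ℝ} {a b x : E} (hg : HasGradientAt g a x)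
    (hf : HasGradientAt f b x) : HasGradientAt (fun y => g y - f y) (a - b) x := by
  rw [hasGradientAt_iff_hasFDerivAt, map_sub]
  exact hg.hasFDerivAt.sub hf.hasFDerivAt

theorem apply_le_add_inner_add_sq_of_inner_sub_le (hg : ∀ x, HasGradientAt g (g' x) x) {L : ℝ}
    (hL : ∀ x y, ⟪g' x - g' y, x - y⟫ ≤ L * ‖x - y‖ ^ 2) (x y : E) :
    g y ≤ g x + ⟪g' x, y - x⟫ + L / 2 * ‖y - x‖ ^ 2 := by
  set v := y - x
  set φ : ℝ → ℝ := fun t => g (x + t • v) - t * ⟪g' x, v⟫ - t ^ 2 * (L / 2 * ‖v‖ ^ 2)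
  have hφ : ∀ t, HasDerivAt φ (⟪g' (x + t • v), v⟫ - ⟪g' x, v⟫ - t * (L * ‖v‖ ^ 2)) t := by
    intro t
    refine ((((hg (x + t • v)).hasDerivAt_comp_add_smul).sub
      ((hasDerivAt_id t).mul_const ⟪g' x, v⟫)).sub
      ((hasDerivAt_pow 2 t).mul_const (L / 2 * ‖v‖ ^ 2))).congr_deriv ?_
    norm_num
    ring
  have hanti : AntitoneOn φ (Set.Icc 0 1) := by
    refine antitoneOn_of_hasDerivWithinAt_nonpos (convex_Icc 0 1)
      (fun t _ => (hφ t).continuousAt.continuousWithinAt)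
      (fun t _ => (hφ t).hasDerivWithinAt) fun t ht => ?_
    rw [interior_Icc] at ht
    have h := hL (x + t • v) x
    rw [add_sub_cancel_left, inner_smul_right, norm_smul, mul_pow, Real.norm_eq_abs, sq_abs,
      inner_sub_left] at h
    nlinarith [ht.1]
  have h01 := hanti (Set.left_mem_Icc.2 zero_le_one) (Set.right_mem_Icc.2 zero_le_one) zero_le_one
  simp only [φ, v, zero_smul, add_zero, one_smul, add_sub_cancel] at h01
  linarith

theorem add_inner_add_sq_le_apply_of_le_inner_sub (hg : ∀ x, HasGradientAt g (g' x) x) {μ : ℝ}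
    (hμ : ∀ x y, μ * ‖x - y‖ ^ 2 ≤ ⟪g' x - g' y, x - y⟫) (x y : E) :
    g x + ⟪g' x, y - x⟫ + μ / 2 * ‖y - x‖ ^ 2 ≤ g y := by
  have h := apply_le_add_inner_add_sq_of_inner_sub_le (fun x => (hg x).neg) (L := -μ)
    (fun x y => by
      rw [show -g' x - -g' y = -(g' x - g' y) by abel, inner_neg_left, neg_mul, neg_le_neg_iff]
      exact hμ x y) x y
  simp only [inner_neg_left] at h
  linarith

theorem add_inner_add_sq_le_apply_of_monotone_of_inner_sub_le
    (hg : ∀ x, HasGradientAt g (g' x) x) (hmono : ∀ x y, 0 ≤ ⟪g' x - g' y, x - y⟫) {L : ℝ}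
    (hL0 : 0 < L) (hL : ∀ x y, ⟪g' x - g' y, x - y⟫ ≤ L * ‖x - y‖ ^ 2) (x y : E) :
    g x + ⟪g' x, y - x⟫ + ‖g' y - g' x‖ ^ 2 / (2 * L) ≤ g y := by
  set w := g' y - g' x
  -- the gradient step from `y` for `g - ⟪g' x, ·⟫`, a convex function minimised at `x`
  set z := y - L⁻¹ • w
  have hx := add_inner_add_sq_le_apply_of_le_inner_sub hg (μ := 0) (by simpa using hmono) x z
  have hy := apply_le_add_inner_add_sq_of_inner_sub_le hg hL y z
  have hzx : z - x = (y - x) - L⁻¹ • w := by simp only [z]; abel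
  have hzy : z - y = -(L⁻¹ • w) := by simp only [z]; abel
  rw [hzx, inner_sub_right, inner_smul_right] at hx
  rw [hzy, inner_neg_right, inner_smul_right, norm_neg, norm_smul, mul_pow, Real.norm_eq_abs,
    sq_abs] at hy
  have hw : ⟪g' y, w⟫ - ⟪g' x, w⟫ = ‖w‖ ^ 2 := by
    rw [← inner_sub_left, real_inner_self_eq_norm_sq]
  have hLinv : L * L⁻¹ = 1 := mul_inv_cancel₀ hL0.ne'
  rw [div_eq_mul_inv, mul_inv, mul_comm]
  linear_combination hx + hy - L⁻¹ * hw + (‖w‖ ^ 2 * L⁻¹ / 2) * hLinv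

theorem sq_norm_sub_le_mul_inner_of_monotone_of_inner_sub_le
    (hg : ∀ x, HasGradientAt g (g' x) x) (hmono : ∀ x y, 0 ≤ ⟪g' x - g' y, x - y⟫) {L : ℝ}
    (hL0 : 0 < L) (hL : ∀ x y, ⟪g' x - g' y, x - y⟫ ≤ L * ‖x - y‖ ^ 2) (x y : E) :
    ‖g' x - g' y‖ ^ 2 ≤ L * ⟪g' x - g' y, x - y⟫ := by
  have hxy := add_inner_add_sq_le_apply_of_monotone_of_inner_sub_le hg hmono hL0 hL x y
  have hyx := add_inner_add_sq_le_apply_of_monotone_of_inner_sub_le hg hmono hL0 hL y x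
  rw [norm_sub_rev] at hxy
  have key : ‖g' x - g' y‖ ^ 2 / L ≤ ⟪g' x - g' y, x - y⟫ := by
    rw [inner_sub_left]
    rw [← neg_sub x y, inner_neg_right] at hxy
    have : ‖g' x - g' y‖ ^ 2 / (2 * L) = ‖g' x - g' y‖ ^ 2 / L / 2 := by ring
    linarith
  rwa [div_le_iff₀' hL0] at key

end Gradient

section Averaged

variable {F : Type*} [NormedAddCommGroup F] [InnerProductSpace ℝ F]

theorem norm_sub_smul_le_mul_norm_iff {α : ℝ} (hα : 0 < α) (u d : F) :
    ‖d - (1 - α) • u‖ ≤ α * ‖u‖ ↔ ‖u - d‖ ^ 2 ≤ 2 * α * ⟪u - d, u⟫ := by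
  have key : ‖d - (1 - α) • u‖ ^ 2 - (α * ‖u‖) ^ 2 = ‖u - d‖ ^ 2 - 2 * α * ⟪u - d, u⟫ := by
    rw [norm_sub_sq_real, norm_sub_sq_real, norm_smul, inner_smul_right, inner_sub_left,
      real_inner_self_eq_norm_sq, real_inner_comm u d, mul_pow, Real.norm_eq_abs, sq_abs]
    ring
  rw [← sq_le_sq₀ (norm_nonneg _) (by positivity)]
  constructor <;> intro h <;> linarith

theorem inner_nonneg_and_inner_le_of_sq_norm_le_mul_inner {L : ℝ} (hL : 0 < L) {w u : F}
    (h : ‖w‖ ^ 2 ≤ L * ⟪w, u⟫) : 0 ≤ ⟪w, u⟫ ∧ ⟪w, u⟫ ≤ L * ‖u‖ ^ 2 := by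
  have hnonneg : 0 ≤ ⟪w, u⟫ := nonneg_of_mul_nonneg_right ((sq_nonneg _).trans h) hL
  refine ⟨hnonneg, ?_⟩
  have hsq : ⟪w, u⟫ * ⟪w, u⟫ ≤ ⟪w, u⟫ * (L * ‖u‖ ^ 2) :=
    calc ⟪w, u⟫ * ⟪w, u⟫ ≤ (‖w‖ * ‖u‖) ^ 2 := by
          rw [← sq]; exact pow_le_pow_left₀ hnonneg (real_inner_le_norm w u) 2
      _ = ‖w‖ ^ 2 * ‖u‖ ^ 2 := mul_pow _ _ 2
      _ ≤ L * ⟪w, u⟫ * ‖u‖ ^ 2 := mul_le_mul_of_nonneg_right h (sq_nonneg _)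
      _ = ⟪w, u⟫ * (L * ‖u‖ ^ 2) := by ring
  rcases hnonneg.eq_or_lt with hzero | hpos
  · rw [← hzero]; positivity
  · exact le_of_mul_le_mul_left hsq hpos

end Averaged

def Nonexpansive {n : ℕ} (T : EuclideanSpace ℝ (Fin n) → EuclideanSpace ℝ (Fin n)) : Prop :=
  ∀ x y, ‖T x - T y‖ ≤ ‖x - y‖

theorem exists_nonexpansive_eq_iff {n : ℕ} {α : ℝ} (hα : 0 < α)
    (T : EuclideanSpace ℝ (Fin n) → EuclideanSpace ℝ (Fin n)) :
    (∃ R, Nonexpansive R ∧ ∀ x, T x = (1 - α) • x + α • R x) ↔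
      ∀ x y, ‖T x - T y - (1 - α) • (x - y)‖ ≤ α * ‖x - y‖ := by
  constructor
  · rintro ⟨R, hR, hT⟩ x y
    have : T x - T y - (1 - α) • (x - y) = α • (R x - R y) := by rw [hT, hT]; module
    rw [this, norm_smul, Real.norm_of_nonneg hα.le]
    exact mul_le_mul_of_nonneg_left (hR x y) hα.le
  · intro hT
    refine ⟨fun x => α⁻¹ • (T x - (1 - α) • x), fun x y => ?_, fun x => ?_⟩
    · have : α⁻¹ • (T x - (1 - α) • x) - α⁻¹ • (T y - (1 - α) • y) =
          α⁻¹ • (T x - T y - (1 - α) • (x - y)) := by module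
      rw [this, norm_smul, Real.norm_of_nonneg (inv_nonneg.2 hα.le), inv_mul_le_iff₀ hα]
      exact hT x y
    · rw [smul_smul, mul_inv_cancel₀ hα.ne', one_smul, add_sub_cancel]

theorem stmt2 {n : ℕ} (f : EuclideanSpace ℝ (Fin n) → ℝ)
    (f' : EuclideanSpace ℝ (Fin n) → EuclideanSpace ℝ (Fin n))
    (hf : ∀ x, HasGradientAt f (f' x) x)
    (α : ℝ) (hα0 : 0 < α) :
    (∃ R, Nonexpansive R ∧ ∀ x, f' x = (1 - α) • x + α • R x) ↔
    (∀ x y, -(2*α - 1) * ‖x - y‖^2 ≤ ⟪f' x - f' y, x - y⟫ ∧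
            ⟪f' x - f' y, x - y⟫ ≤ ‖x - y‖^2) := by
  have hsub : ∀ x y, x - y - (f' x - f' y) = (x - f' x) - (y - f' y) := fun x y => by abel
  have hinner : ∀ x y, ⟪x - y - (f' x - f' y), x - y⟫ = ‖x - y‖ ^ 2 - ⟪f' x - f' y, x - y⟫ :=
    fun x y => by rw [inner_sub_left, real_inner_self_eq_norm_sq]
  simp_rw [exists_nonexpansive_eq_iff hα0, norm_sub_smul_le_mul_norm_iff hα0]
  constructor
  · intro h x y
    have hbounds := inner_nonneg_and_inner_le_of_sq_norm_le_mul_inner (by positivity) (h x y)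
    rw [hinner] at hbounds
    constructor <;> linarith
  · intro h x y
    have hg : ∀ x, HasGradientAt (fun y => ‖y‖ ^ 2 / 2 - f y) (x - f' x) x :=
      fun x => (hasGradientAt_norm_sq_div_two x).sub (hf x)
    rw [hsub]
    refine sq_norm_sub_le_mul_inner_of_monotone_of_inner_sub_le hg (fun x y => ?_)
      (by positivity) (fun x y => ?_) x y <;>
    · rw [← hsub, hinner]
      linarith [h x y]
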